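/- arXiv:2508.01724 — 5 statements merged into one kernel-verified Lean document; each statement's English description precedes it below -/
import Mathlib

section
/- Finite-horizon policy improvement: let πb be a policy and let σ be a nonstationary policy such that for every k and every state s one has g s (σ (k+1) s) + V πb k (f s (σ (k+1) s)) ≤ V πb (k+1) s. Then for every k and every state s, J σ k s ≤ V πb k s. -/
/-- k-step cost of a stationary policy `π`:
`V π 0 s = 0` and `V π (k+1) s = g s (π s) + V π k (f s (π s))`. -/
def polCost {S A : Type*} (f : S → A → S) (g : S → A → ℝ) (π : S → A) : ℕ → S → ℝ
  | 0 => fun _ => 0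
  | k + 1 => fun s => g s (π s) + polCost f g π k (f s (π s))

/-- Cost of a nonstationary policy `σ`:
`J σ 0 s = 0` and `J σ (k+1) s = g s (σ (k+1) s) + J σ k (f s (σ (k+1) s))`. -/
def nonstatCost {S A : Type*} (f : S → A → S) (g : S → A → ℝ) (σ : ℕ → S → A) : ℕ → S → ℝ
  | 0 => fun _ => 0
  | k + 1 => fun s => g s (σ (k + 1) s) + nonstatCost f g σ k (f s (σ (k + 1) s))

theorem finite_horizon_policy_improvement_general
    {S A : Type*}
    (f : S → A → S) (g : S → A → ℝ)
    (πb : S → A)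
    (σ : ℕ → S → A)
    (h : ∀ k s, g s (σ (k + 1) s) + polCost f g πb k (f s (σ (k + 1) s))
        ≤ polCost f g πb (k + 1) s) :
    ∀ k s, nonstatCost f g σ k s ≤ polCost f g πb k s := by
  intro k
  induction k with
  | zero => exact fun _ => le_rfl
  | succ k ih =>
    intro s
    calc nonstatCost f g σ (k + 1) s
        = g s (σ (k + 1) s) + nonstatCost f g σ k (f s (σ (k + 1) s)) := rfl
      _ ≤ g s (σ (k + 1) s) + polCost f g πb k (f s (σ (k + 1) s)) := by gcongr; exact ih _
      _ ≤ polCost f g πb (k + 1) s := h k s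

/-- Finite-horizon policy improvement. -/
theorem finite_horizon_policy_improvement
    {S A : Type*} (adm : S → Finset A) (hadm : ∀ s, (adm s).Nonempty)
    (f : S → A → S) (g : S → A → ℝ) (hg : ∀ s a, 0 ≤ g s a)
    (πb : S → A) (hπb : ∀ s, πb s ∈ adm s)
    (σ : ℕ → S → A) (hσ : ∀ k s, σ k s ∈ adm s)
    (h : ∀ k s, g s (σ (k + 1) s) + polCost f g πb k (f s (σ (k + 1) s))
        ≤ polCost f g πb (k + 1) s) :
    ∀ k s, nonstatCost f g σ k s ≤ polCost f g πb k s :=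
  finite_horizon_policy_improvement_general f g πb σ h
end

section
/- Monotonic improvement guarantee of rollout (Theorem 1, deterministic finite-horizon form): let πb be a policy and let σ be a nonstationary policy such that for every k and every state s, the action σ (k+1) s minimizes a ↦ g s a + V πb k (f s a) over adm s. Then for every horizon k and every state s, the rollout cost satisfies J σ k s ≤ V πb k s; that is, the rollout policy performs no worse than the base policy from every state. -/
/-- Monotonic improvement guarantee of rollout (deterministic finite-horizon form). -/
theorem rollout_monotonic_improvement
    {S A : Type*} (adm : S → Finset A) (hadm : ∀ s, (adm s).Nonempty)
    (f : S → A → S) (g : S → A → ℝ) (hg : ∀ s a, 0 ≤ g s a)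
    (πb : S → A) (hπb : ∀ s, πb s ∈ adm s)
    (σ : ℕ → S → A) (hσ : ∀ k s, σ k s ∈ adm s)
    (hmin : ∀ k s, ∀ a ∈ adm s,
      g s (σ (k + 1) s) + polCost f g πb k (f s (σ (k + 1) s))
        ≤ g s a + polCost f g πb k (f s a)) :
    ∀ k s, nonstatCost f g σ k s ≤ polCost f g πb k s := by
  intro k
  induction k with
  | zero => intro s; simp [nonstatCost, polCost]
  | succ k ih =>
    intro s
    simp only [nonstatCost, polCost]
    calc g s (σ (k + 1) s) + nonstatCost f g σ k (f s (σ (k + 1) s))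
        ≤ g s (σ (k + 1) s) + polCost f g πb k (f s (σ (k + 1) s)) := by
          gcongr; exact ih _
      _ ≤ g s (πb s) + polCost f g πb k (f s (πb s)) := hmin k s (πb s) (hπb s)
end

section
/- Discounted policy improvement: let πb and π' be policies such that for every state s, g s (π' s) + γ * V πb (f s (π' s)) ≤ V πb s. Then for every state s, V π' s ≤ V πb s. -/
/-- Discounted cost of a stationary policy `π`:
`V π s = ∑' n, γ^n * g (fπ^[n] s) (π (fπ^[n] s))` where `fπ s = f s (π s)`. -/
noncomputable def discCost {S A : Type*} (f : S → A → S) (g : S → A → ℝ) (γ : ℝ)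
    (π : S → A) (s : S) : ℝ :=
  ∑' n, γ ^ n * g ((fun s' => f s' (π s'))^[n] s) (π ((fun s' => f s' (π s'))^[n] s))

/-- Discounted policy improvement. -/
theorem discounted_policy_improvement
    {S A : Type*} (adm : S → Finset A) (hadm : ∀ s, (adm s).Nonempty)
    (f : S → A → S) (C : ℝ) (hC : 0 ≤ C)
    (g : S → A → ℝ) (hg : ∀ s a, 0 ≤ g s a ∧ g s a ≤ C)
    (γ : ℝ) (hγ0 : 0 ≤ γ) (hγ1 : γ < 1)
    (πb : S → A) (hπb : ∀ s, πb s ∈ adm s)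
    (π' : S → A) (hπ' : ∀ s, π' s ∈ adm s)
    (h : ∀ s, g s (π' s) + γ * discCost f g γ πb (f s (π' s)) ≤ discCost f g γ πb s) :
    ∀ s, discCost f g γ π' s ≤ discCost f g γ πb s := by
  intro s
  set F : S → S := fun s' => f s' (π' s') with hF
  -- nonnegativity of each V
  have hVnn : ∀ (π : S → A) (s : S), 0 ≤ discCost f g γ π s := by
    intro π s
    apply tsum_nonneg
    intro n
    exact mul_nonneg (pow_nonneg hγ0 n) (hg _ _).1
  -- key induction
  have key : ∀ N, (∑ n ∈ Finset.range N, γ ^ n * g (F^[n] s) (π' (F^[n] s)))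
      + γ ^ N * discCost f g γ πb (F^[N] s) ≤ discCost f g γ πb s := by
    intro N
    induction N with
    | zero => simp
    | succ N ih =>
      have h1 := h (F^[N] s)
      have h2 : γ ^ N * (g (F^[N] s) (π' (F^[N] s))
          + γ * discCost f g γ πb (f (F^[N] s) (π' (F^[N] s))))
          ≤ γ ^ N * discCost f g γ πb (F^[N] s) :=
        mul_le_mul_of_nonneg_left h1 (pow_nonneg hγ0 N)
      have h3 : F^[N + 1] s = f (F^[N] s) (π' (F^[N] s)) := by
        rw [Function.iterate_succ_apply']
      rw [Finset.sum_range_succ]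
      calc (∑ n ∈ Finset.range N, γ ^ n * g (F^[n] s) (π' (F^[n] s)))
            + γ ^ N * g (F^[N] s) (π' (F^[N] s))
            + γ ^ (N + 1) * discCost f g γ πb (F^[N + 1] s)
          = (∑ n ∈ Finset.range N, γ ^ n * g (F^[n] s) (π' (F^[n] s)))
            + γ ^ N * (g (F^[N] s) (π' (F^[N] s))
              + γ * discCost f g γ πb (f (F^[N] s) (π' (F^[N] s)))) := by
            rw [h3]; ring
        _ ≤ (∑ n ∈ Finset.range N, γ ^ n * g (F^[n] s) (π' (F^[n] s)))
            + γ ^ N * discCost f g γ πb (F^[N] s) := by linarith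
        _ ≤ discCost f g γ πb s := ih
  -- partial sums bounded
  have hb : ∀ N, (∑ n ∈ Finset.range N, γ ^ n * g (F^[n] s) (π' (F^[n] s)))
      ≤ discCost f g γ πb s := by
    intro N
    have := key N
    have h4 : 0 ≤ γ ^ N * discCost f g γ πb (F^[N] s) :=
      mul_nonneg (pow_nonneg hγ0 N) (hVnn _ _)
    linarith
  -- summability
  have hsum : Summable (fun n => γ ^ n * g (F^[n] s) (π' (F^[n] s))) := by
    apply Summable.of_nonneg_of_le
    · intro n; exact mul_nonneg (pow_nonneg hγ0 n) (hg _ _).1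
    · intro n
      exact mul_le_mul_of_nonneg_left (hg _ _).2 (pow_nonneg hγ0 n)
    · exact (summable_geometric_of_lt_one hγ0 hγ1).mul_right C
  exact Summable.tsum_le_of_sum_range_le hsum hb
end

section
/- Monotonic improvement guarantee of rollout (Theorem 1, discounted stationary form): let πb be a policy and let π' be a policy such that for every state s, the action π' s minimizes a ↦ g s a + γ * V πb (f s a) over adm s. Then for every state s, V π' s ≤ V πb s. -/
namespace discCost

variable {S A : Type*} (f : S → A → S) (g : S → A → ℝ) {γ : ℝ} (π : S → A)

theorem nonneg (hγ0 : 0 ≤ γ) (hg0 : ∀ s a, 0 ≤ g s a) (s : S) : 0 ≤ discCost f g γ π s :=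
  tsum_nonneg fun n => mul_nonneg (pow_nonneg hγ0 n) (hg0 _ _)

theorem summable {C : ℝ} (hγ0 : 0 ≤ γ) (hγ1 : γ < 1) (hg0 : ∀ s a, 0 ≤ g s a)
    (hgC : ∀ s a, g s a ≤ C) (s : S) :
    Summable fun n => γ ^ n * g ((fun s' => f s' (π s'))^[n] s)
      (π ((fun s' => f s' (π s'))^[n] s)) :=
  Summable.of_nonneg_of_le (fun n => mul_nonneg (pow_nonneg hγ0 n) (hg0 _ _))
    (fun n => by rw [mul_comm C]; exact mul_le_mul_of_nonneg_left (hgC _ _) (pow_nonneg hγ0 n))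
    ((summable_geometric_of_lt_one hγ0 hγ1).mul_left C)

theorem eq_add_mul (s : S)
    (hsum : Summable fun n => γ ^ n * g ((fun s' => f s' (π s'))^[n] s)
      (π ((fun s' => f s' (π s'))^[n] s))) :
    discCost f g γ π s = g s (π s) + γ * discCost f g γ π (f s (π s)) := by
  rw [discCost, hsum.tsum_eq_zero_add, discCost, ← tsum_mul_left]
  simp only [pow_zero, one_mul, Function.iterate_zero_apply, Function.iterate_succ_apply,
    pow_succ, mul_comm _ γ, mul_assoc]

section Supersolution

variable {W : S → ℝ} (hγ0 : 0 ≤ γ)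
  (hW : ∀ s, g s (π s) + γ * W (f s (π s)) ≤ W s)
include hγ0 hW

theorem sum_range_add_pow_mul_le (N : ℕ) (s : S) :
    ∑ n ∈ Finset.range N, γ ^ n * g ((fun s' => f s' (π s'))^[n] s)
        (π ((fun s' => f s' (π s'))^[n] s))
      + γ ^ N * W ((fun s' => f s' (π s'))^[N] s) ≤ W s := by
  induction N with
  | zero => simp
  | succ N ih =>
    set x := (fun s' => f s' (π s'))^[N] s
    calc _ = ∑ n ∈ Finset.range N, γ ^ n * g ((fun s' => f s' (π s'))^[n] s)
              (π ((fun s' => f s' (π s'))^[n] s))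
            + γ ^ N * (g x (π x) + γ * W (f x (π x))) := by
          rw [Finset.sum_range_succ, Function.iterate_succ_apply']; ring
      _ ≤ _ := by grw [hW x]; exact ih

theorem le_of_bellman_le (hg0 : ∀ s a, 0 ≤ g s a) (hW0 : ∀ s, 0 ≤ W s) (s : S) :
    discCost f g γ π s ≤ W s :=
  Real.tsum_le_of_sum_range_le (fun n => mul_nonneg (pow_nonneg hγ0 n) (hg0 _ _)) fun N =>
    le_trans (le_add_of_nonneg_right (mul_nonneg (pow_nonneg hγ0 N) (hW0 _)))
      (sum_range_add_pow_mul_le f g π hγ0 hW N s)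

end Supersolution

end discCost

theorem discounted_rollout_monotonic_improvement_general
    {S A : Type*} (adm : S → Finset A)
    (f : S → A → S) (C : ℝ)
    (g : S → A → ℝ) (hg : ∀ s a, 0 ≤ g s a ∧ g s a ≤ C)
    (γ : ℝ) (hγ0 : 0 ≤ γ) (hγ1 : γ < 1)
    (πb : S → A) (hπb : ∀ s, πb s ∈ adm s)
    (π' : S → A)
    (hmin : ∀ s, ∀ a ∈ adm s,
      g s (π' s) + γ * discCost f g γ πb (f s (π' s))
        ≤ g s a + γ * discCost f g γ πb (f s a)) :
    ∀ s, discCost f g γ π' s ≤ discCost f g γ πb s := by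
  have hg0 : ∀ s a, 0 ≤ g s a := fun s a => (hg s a).1
  have hbellman : ∀ s, discCost f g γ πb s
      = g s (πb s) + γ * discCost f g γ πb (f s (πb s)) := fun s =>
    discCost.eq_add_mul f g πb s
      (discCost.summable f g πb hγ0 hγ1 hg0 (fun s a => (hg s a).2) s)
  refine discCost.le_of_bellman_le f g π' hγ0 (fun s => ?_) hg0
    (discCost.nonneg f g πb hγ0 hg0)
  calc g s (π' s) + γ * discCost f g γ πb (f s (π' s))
      ≤ g s (πb s) + γ * discCost f g γ πb (f s (πb s)) := hmin s (πb s) (hπb s)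
    _ = discCost f g γ πb s := (hbellman s).symm

/-- Monotonic improvement guarantee of rollout (discounted stationary form). -/
theorem discounted_rollout_monotonic_improvement
    {S A : Type*} (adm : S → Finset A) (hadm : ∀ s, (adm s).Nonempty)
    (f : S → A → S) (C : ℝ) (hC : 0 ≤ C)
    (g : S → A → ℝ) (hg : ∀ s a, 0 ≤ g s a ∧ g s a ≤ C)
    (γ : ℝ) (hγ0 : 0 ≤ γ) (hγ1 : γ < 1)
    (πb : S → A) (hπb : ∀ s, πb s ∈ adm s)
    (π' : S → A) (hπ' : ∀ s, π' s ∈ adm s)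
    (hmin : ∀ s, ∀ a ∈ adm s,
      g s (π' s) + γ * discCost f g γ πb (f s (π' s))
        ≤ g s a + γ * discCost f g γ πb (f s a)) :
    ∀ s, discCost f g γ π' s ≤ discCost f g γ πb s :=
  discounted_rollout_monotonic_improvement_general adm f C g hg γ hγ0 hγ1 πb hπb π' hmin
end

section
/- Parallel rollout improves over every heuristic in a pool: let Π be a nonempty finite set of policies and define φ k s = the minimum over πb ∈ Π of V πb k s. Let σ be a nonstationary policy such that for every k and every state s, the action σ (k+1) s minimizes a ↦ g s a + φ k (f s a) over adm s. Then for every horizon k and every state s, J σ k s ≤ φ k s; in particular, the rollout policy performs no worse than every individual policy in the pool Π from every state. -/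
/-- Pointwise minimum of the k-step costs over a nonempty finite pool of policies:
`φ k s = min_{πb ∈ Pool} V πb k s`. -/
noncomputable def poolMin {S A : Type*} (f : S → A → S) (g : S → A → ℝ)
    (Pool : Finset (S → A)) (hPool : Pool.Nonempty) (k : ℕ) (s : S) : ℝ :=
  Pool.inf' hPool fun πb => polCost f g πb k s

/-! Induction on the horizon. The lookahead value `g s a + φ k (f s a)` at the action `πb s` of a
pool policy is at most `V πb (k+1) s`, because `φ k ≤ V πb k`; so the action chosen by `σ`, which
minimizes the lookahead value, costs at most `φ (k+1) s` once `J σ k ≤ φ k` is known. -/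

section PoolMin

variable {S A : Type*} (f : S → A → S) (g : S → A → ℝ) {Pool : Finset (S → A)}
  (hPool : Pool.Nonempty)

theorem poolMin_zero (s : S) : poolMin f g Pool hPool 0 s = 0 :=
  Finset.inf'_const hPool 0

theorem poolMin_le_polCost {π : S → A} (hπ : π ∈ Pool) (k : ℕ) (s : S) :
    poolMin f g Pool hPool k s ≤ polCost f g π k s :=
  Finset.inf'_le _ hπ

theorem le_poolMin_succ {k : ℕ} {s : S} {c : ℝ}
    (h : ∀ π ∈ Pool, c ≤ g s (π s) + poolMin f g Pool hPool k (f s (π s))) :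
    c ≤ poolMin f g Pool hPool (k + 1) s :=
  Finset.le_inf' hPool _ fun π hπ =>
    (h π hπ).trans (add_le_add_right (poolMin_le_polCost f g hPool hπ k _) _)

end PoolMin

theorem parallel_rollout_improvement_general
    {S A : Type*} (adm : S → Finset A)
    (f : S → A → S) (g : S → A → ℝ)
    (Pool : Finset (S → A)) (hPool : Pool.Nonempty)
    (hPoolPol : ∀ πb ∈ Pool, ∀ s, πb s ∈ adm s)
    (σ : ℕ → S → A)
    (hmin : ∀ k s, ∀ a ∈ adm s,
      g s (σ (k + 1) s) + poolMin f g Pool hPool k (f s (σ (k + 1) s))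
        ≤ g s a + poolMin f g Pool hPool k (f s a)) :
    ∀ k s, nonstatCost f g σ k s ≤ poolMin f g Pool hPool k s := by
  intro k
  induction k with
  | zero => exact fun s => (poolMin_zero f g hPool s).ge
  | succ k ih =>
    intro s
    refine le_poolMin_succ f g hPool fun πb hπb => ?_
    calc nonstatCost f g σ (k + 1) s
        = g s (σ (k + 1) s) + nonstatCost f g σ k (f s (σ (k + 1) s)) := rfl
      _ ≤ g s (σ (k + 1) s) + poolMin f g Pool hPool k (f s (σ (k + 1) s)) :=
        add_le_add_right (ih _) _
      _ ≤ g s (πb s) + poolMin f g Pool hPool k (f s (πb s)) :=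
        hmin k s _ (hPoolPol πb hπb s)

/-- Parallel rollout improves over every heuristic in the pool. -/
theorem parallel_rollout_improvement
    {S A : Type*} (adm : S → Finset A) (hadm : ∀ s, (adm s).Nonempty)
    (f : S → A → S) (g : S → A → ℝ) (hg : ∀ s a, 0 ≤ g s a)
    (Pool : Finset (S → A)) (hPool : Pool.Nonempty)
    (hPoolPol : ∀ πb ∈ Pool, ∀ s, πb s ∈ adm s)
    (σ : ℕ → S → A) (hσ : ∀ k s, σ k s ∈ adm s)
    (hmin : ∀ k s, ∀ a ∈ adm s,
      g s (σ (k + 1) s) + poolMin f g Pool hPool k (f s (σ (k + 1) s))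
        ≤ g s a + poolMin f g Pool hPool k (f s a)) :
    ∀ k s, nonstatCost f g σ k s ≤ poolMin f g Pool hPool k s :=
  parallel_rollout_improvement_general adm f g Pool hPool hPoolPol σ hmin
end
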